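/- arXiv:2108.04192 — 5 statements merged into one kernel-verified Lean document; each statement's English description precedes it below -/
import Mathlib

section
/- For a conflict-free set of assumptions A in an ABA+ framework, letting U be the set of assumptions not individually <-attacked by A, A is <-admissible if and only if there is no set B ⊆ U such that B <-attacks A and A does not <-attack B. -/
/-- An ABA⁺ framework over a language (type of sentences) `L`:
rules are (head, body) pairs, `asms` the assumptions, `contrary` the
contrary function and `le` a preorder (preference) on assumptions. -/
structure ABAF (L : Type) where
  rules : Set (L × Set L)
  asms : Set L
  contrary : L → L
  le : L → L → Prop

namespace ABAF
variable {L : Type}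

/-- Strict counterpart of the preference preorder. -/
def lt (F : ABAF L) (a b : L) : Prop := F.le a b ∧ ¬ F.le b a

/-- Tree-derivability of a sentence from a set `X` (via some subset of the rules):
either the sentence is a leaf in `X`, or it is the head of a rule all of whose
body members are tree-derivable. -/
inductive TDeriv (F : ABAF L) (X : Set L) : L → Prop
  | asm (a : L) : a ∈ X → TDeriv F X a
  | rule (r : L × Set L) : r ∈ F.rules → (∀ b ∈ r.2, TDeriv F X b) → TDeriv F X r.1

/-- Normal <-attack: a subset `A' ⊆ A` tree-derives the contrary of some `b ∈ B`,
with no member of `A'` strictly less preferred than `b`. -/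
def NAtt (F : ABAF L) (A B : Set L) : Prop :=
  ∃ A' ⊆ A, ∃ b ∈ B, TDeriv F A' (F.contrary b) ∧ ∀ a' ∈ A', ¬ F.lt a' b

/-- Reverse <-attack: a subset `B' ⊆ B` tree-derives the contrary of some `a ∈ A`,
with some member of `B'` strictly less preferred than `a`. -/
def RAtt (F : ABAF L) (A B : Set L) : Prop :=
  ∃ B' ⊆ B, ∃ a ∈ A, TDeriv F B' (F.contrary a) ∧ ∃ b' ∈ B', F.lt b' a

/-- `A` <-attacks `B`. -/
def Att (F : ABAF L) (A B : Set L) : Prop := NAtt F A B ∨ RAtt F A B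

/-- `A` is conflict-free: it does not <-attack itself. -/
def ConflictFree (F : ABAF L) (A : Set L) : Prop := ¬ Att F A A

/-- `A` defends `B`: `A` <-attacks every assumption set `C` that <-attacks `B`. -/
def Defends (F : ABAF L) (A B : Set L) : Prop :=
  ∀ C, C ⊆ F.asms → Att F C B → Att F A C

/-- `A` is <-admissible: a conflict-free assumption set defending itself. -/
def Admissible (F : ABAF L) (A : Set L) : Prop :=
  A ⊆ F.asms ∧ ConflictFree F A ∧ Defends F A A

/-- `A` is <-complete: <-admissible and containing every assumption set it defends. -/
def Complete (F : ABAF L) (A : Set L) : Prop :=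
  Admissible F A ∧ ∀ B, B ⊆ F.asms → Defends F A B → B ⊆ A

/-- `A` is <-preferred: <-admissible and ⊆-maximal among <-admissible sets. -/
def Preferred (F : ABAF L) (A : Set L) : Prop :=
  Admissible F A ∧ ∀ B, Admissible F B → ¬ A ⊂ B

/-- The assumptions not individually <-attacked by `A`. -/
def U (F : ABAF L) (A : Set L) : Set L := {a ∈ F.asms | ¬ Att F A {a}}

/-- A valid rule sequence (stored in reverse: the head of the list is the last
rule): each rule is in `F.rules` and each body member is in `X` or the head of
an earlier (i.e. later-in-the-list) rule. -/
def ValidSeq (F : ABAF L) (X : Set L) : List (L × Set L) → Prop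
  | [] => True
  | r :: rest =>
      r ∈ F.rules ∧ (∀ b ∈ r.2, b ∈ X ∨ ∃ r' ∈ rest, r'.1 = b) ∧ ValidSeq F X rest

/-- Forward-derivability `X ⊢_R s`: `s ∈ X`, or there is a finite sequence of
rules whose last rule has head `s`. -/
def Fwd (F : ABAF L) (X : Set L) (s : L) : Prop :=
  s ∈ X ∨ ∃ r rest, ValidSeq F X (r :: rest) ∧ r.1 = s

/-- The deductive closure `Th_R(X)`. -/
def Th (F : ABAF L) (X : Set L) : Set L := {s | Fwd F X s}

/-- Flatness: no assumption occurs as the head of a rule. -/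
def Flat (F : ABAF L) : Prop := ∀ r ∈ F.rules, r.1 ∉ F.asms

/-- Plain ABA attack (empty preferences): `A` forward-derives the contrary of a
member of `B`. -/
def AAtt (F : ABAF L) (A B : Set L) : Prop := ∃ b ∈ B, Fwd F A (F.contrary b)

/-- Conflict-freeness for plain ABA. -/
def ACF (F : ABAF L) (A : Set L) : Prop := ¬ AAtt F A A

/-- Defense for plain ABA. -/
def ADef (F : ABAF L) (A B : Set L) : Prop :=
  ∀ C, C ⊆ F.asms → AAtt F C B → AAtt F A C

/-- Admissibility for plain ABA. -/
def AAdm (F : ABAF L) (A : Set L) : Prop := A ⊆ F.asms ∧ ACF F A ∧ ADef F A A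

/-- Completeness for plain ABA. -/
def AComplete (F : ABAF L) (A : Set L) : Prop :=
  AAdm F A ∧ ∀ B, B ⊆ F.asms → ADef F A B → B ⊆ A

/-- Preferredness for plain ABA. -/
def APref (F : ABAF L) (A : Set L) : Prop := AAdm F A ∧ ∀ B, AAdm F B → ¬ A ⊂ B

end ABAF

/-- For a conflict-free assumption set `A`, with `U` the assumptions
not individually <-attacked by `A`, `A` is <-admissible iff there is no
`B ⊆ U` such that `B` <-attacks `A` while `A` does not <-attack `B`. -/
theorem adm_characterization {L : Type} (F : ABAF L) (A : Set L)
    (hA : A ⊆ F.asms) (hcf : ABAF.ConflictFree F A) :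
    ABAF.Admissible F A ↔
      ¬ ∃ B, B ⊆ ABAF.U F A ∧ ABAF.Att F B A ∧ ¬ ABAF.Att F A B := by
  constructor
  · rintro ⟨-, -, hdef⟩ ⟨B, hBU, hBA, hnAB⟩
    exact hnAB (hdef B (fun b hb => (hBU hb).1) hBA)
  · intro h
    refine ⟨hA, hcf, fun C hC hCA => ?_⟩
    by_contra hnAC
    refine h ⟨C, fun c hc => ⟨hC hc, fun hac => hnAC ?_⟩, hCA, hnAC⟩
    rcases hac with ⟨A', hA', b, hb, hd, hmax⟩ | ⟨B', hB', a, ha, hd, hex⟩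
    · exact Or.inl ⟨A', hA', b, hb ▸ hc, hd, hmax⟩
    · exact Or.inr ⟨B', fun x hx => (hB' hx) ▸ hc, a, ha, hd, hex⟩
end

section
/- For a conflict-free set of assumptions A in an ABA+ framework, letting U be the set of assumptions not individually <-attacked by A, A is <-complete if and only if A is <-admissible and for every assumption a ∈ 𝒜 \ A there exists a set B ⊆ U such that B <-attacks {a} and A does not <-attack B. -/
/-- For a conflict-free assumption set `A`, with `U` the assumptions
not individually <-attacked by `A`, `A` is <-complete iff `A` is <-admissible
and every assumption `a ∈ 𝒜 \ A` is <-attacked by some `B ⊆ U` that `A` does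
not <-attack. -/
theorem com_characterization {L : Type} (F : ABAF L) (A : Set L)
    (hA : A ⊆ F.asms) (hcf : ABAF.ConflictFree F A) :
    ABAF.Complete F A ↔
      (ABAF.Admissible F A ∧
        ∀ a ∈ F.asms \ A,
          ∃ B, B ⊆ ABAF.U F A ∧ ABAF.Att F B {a} ∧ ¬ ABAF.Att F A B) := by
  have mono : ∀ X B C : Set L, B ⊆ C → ABAF.Att F X B → ABAF.Att F X C := by
    rintro X B C hBC (⟨A', hA', b, hb, hd, hp⟩ | ⟨B', hB', a, ha, hd, hp⟩)
    · exact Or.inl ⟨A', hA', b, hBC hb, hd, hp⟩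
    · exact Or.inr ⟨B', fun x hx => hBC (hB' hx), a, ha, hd, hp⟩
  constructor
  · rintro ⟨hadm, hcomp⟩
    refine ⟨hadm, fun a ha => ?_⟩
    have hnd : ¬ ABAF.Defends F A {a} := by
      intro hd
      exact ha.2 (hcomp {a} (Set.singleton_subset_iff.2 ha.1) hd rfl)
    simp only [ABAF.Defends, not_forall] at hnd
    obtain ⟨C, hC, hatt, hnatt⟩ := hnd
    refine ⟨C, ?_, hatt, hnatt⟩
    intro c hc
    refine ⟨hC hc, fun hAc => hnatt ?_⟩
    exact mono A {c} C (Set.singleton_subset_iff.2 hc) hAc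
  · rintro ⟨hadm, hprop⟩
    refine ⟨hadm, fun B hB hdef b hb => ?_⟩
    by_contra hbA
    obtain ⟨C, hCU, hCatt, hnatt⟩ := hprop b ⟨hB hb, hbA⟩
    exact hnatt (hdef C (fun c hc => (hCU hc).1)
      (mono C {b} B (Set.singleton_subset_iff.2 hb) hCatt))
end

section
/- If A is a <-complete assumption set in an ABA+ framework and U is the set of assumptions not individually <-attacked by A, then for every assumption a ∈ 𝒜, either a ∈ A or U <-attacks {a}. -/
/-- If `A` is <-complete and `U` is the set of assumptions not
individually <-attacked by `A`, then every assumption is in `A` or is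
<-attacked by `U`. -/
theorem complete_in_or_attacked {L : Type} (F : ABAF L) (A : Set L)
    (hA : A ⊆ F.asms) (hcom : ABAF.Complete F A) :
    ∀ a ∈ F.asms, a ∈ A ∨ ABAF.Att F (ABAF.U F A) {a} := by
  intro a ha
  by_cases h : ABAF.Att F (ABAF.U F A) {a}
  · exact Or.inr h
  left
  have hdef : ABAF.Defends F A {a} := by
    intro C hC hatt
    by_contra hna
    have hCU : C ⊆ ABAF.U F A := by
      intro c hc
      refine ⟨hC hc, fun hAc => hna ?_⟩
      rcases hAc with ⟨A', hA', b, hb, hd, hpr⟩ | ⟨B', hB', x, hx, hd, hlt⟩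
      · exact Or.inl ⟨A', hA', b, by rw [Set.mem_singleton_iff] at hb; exact hb ▸ hc, hd, hpr⟩
      · refine Or.inr ⟨B', fun y hy => ?_, x, hx, hd, hlt⟩
        have := hB' hy
        rw [Set.mem_singleton_iff] at this
        exact this ▸ hc
    apply h
    rcases hatt with ⟨A', hA', b, hb, hd, hpr⟩ | ⟨B', hB', x, hx, hd, hlt⟩
    · exact Or.inl ⟨A', hA'.trans hCU, b, hb, hd, hpr⟩
    · exact Or.inr ⟨B', hB', x, hCU hx, hd, hlt⟩
  exact Set.singleton_subset_iff.mp (hcom.2 {a} (Set.singleton_subset_iff.mpr ha) hdef)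
end

section
/- Conflict-freeness in ABA+ is independent of the preference relation: a set of assumptions A is conflict-free with respect to the <-attack relation if and only if A does not forward-derive the contrary of any of its own members. -/
lemma tderiv_mono {L : Type} (F : ABAF L) {X Y : Set L} (h : X ⊆ Y) {s : L}
    (hd : ABAF.TDeriv F X s) : ABAF.TDeriv F Y s := by
  induction hd with
  | asm a ha => exact ABAF.TDeriv.asm a (h ha)
  | rule r hr _ ih => exact ABAF.TDeriv.rule r hr ih

/-- Conflict-freeness is independent of preferences: `A` is
conflict-free w.r.t. <-attacks iff `A` does not forward-derive the contrary of
any of its own members (tree- and forward-derivability assumed to coincide). -/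
theorem cf_pref_independent {L : Type} (F : ABAF L)
    (htf : ∀ (X : Set L) (s : L), ABAF.TDeriv F X s ↔ ABAF.Fwd F X s)
    (A : Set L) (hA : A ⊆ F.asms) :
    ABAF.ConflictFree F A ↔ ¬ ∃ a ∈ A, ABAF.Fwd F A (F.contrary a) := by
  constructor
  · intro hcf hex
    obtain ⟨a, haA, hfw⟩ := hex
    apply hcf
    by_cases hlt : ∀ a' ∈ A, ¬ F.lt a' a
    · exact Or.inl ⟨A, le_refl A, a, haA, (htf A _).mpr hfw, hlt⟩
    · push_neg at hlt
      obtain ⟨a', ha'A, hlt'⟩ := hlt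
      exact Or.inr ⟨A, le_refl A, a, haA, (htf A _).mpr hfw, a', ha'A, hlt'⟩
  · intro hno hatt
    apply hno
    rcases hatt with ⟨A', hA', b, hbA, hd, _⟩ | ⟨B', hB', a, haA, hd, _⟩
    · exact ⟨b, hbA, (htf A _).mp (tderiv_mono F hA' hd)⟩
    · exact ⟨a, haA, (htf A _).mp (tderiv_mono F hB' hd)⟩
end

section
/- In an ABA framework (empty preferences), the set of sentences supported by an assumption set E equals Th_R(E), and E is complete if and only if E is conflict-free, every assumption attacked by the set of assumptions not attacked by Th_R(E)-derivations is outside E, and every assumption outside E is attacked by the set of undefeated assumptions. -/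
lemma ABAF.validSeq_mono {L : Type} (F : ABAF L) {X Y : Set L} (h : X ⊆ Y) :
    ∀ l, ABAF.ValidSeq F X l → ABAF.ValidSeq F Y l := by
  intro l
  induction l with
  | nil => intro _; trivial
  | cons r rest ih =>
    rintro ⟨hr, hb, hrest⟩
    exact ⟨hr, fun b hbr => (hb b hbr).imp (fun hx => h hx) id, ih hrest⟩

lemma ABAF.fwd_mono {L : Type} (F : ABAF L) {X Y : Set L} (h : X ⊆ Y) {s : L} :
    ABAF.Fwd F X s → ABAF.Fwd F Y s := by
  rintro (hs | ⟨r, rest, hv, hh⟩)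
  · exact Or.inl (h hs)
  · exact Or.inr ⟨r, rest, ABAF.validSeq_mono F h _ hv, hh⟩

/-- Correctness of the π_com encoding: the sentences supported
by `E` are exactly `Th_R(E)`, and a conflict-free `E` is complete iff no
member of `E` has its contrary derivable from the undefeated assumptions `D`,
and every assumption outside `E` has its contrary derivable from `D`. -/
theorem pi_com_correct {L : Type} (F : ABAF L) (E : Set L)
    (hE : E ⊆ F.asms) (hcf : ABAF.ACF F E) :
    {s : L | ABAF.Fwd F E s} = ABAF.Th F E ∧
    (ABAF.AComplete F E ↔
      ((∀ e ∈ E,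
          F.contrary e ∉
            ABAF.Th F {x ∈ F.asms | ¬ ABAF.Fwd F E (F.contrary x)}) ∧
       (∀ a ∈ F.asms, a ∉ E →
          F.contrary a ∈
            ABAF.Th F {x ∈ F.asms | ¬ ABAF.Fwd F E (F.contrary x)}))) := by
  constructor
  · rfl
  set D : Set L := {x ∈ F.asms | ¬ ABAF.Fwd F E (F.contrary x)} with hD
  have hDsub : D ⊆ F.asms := fun x hx => hx.1
  constructor
  · rintro ⟨⟨_, _, hdef⟩, hcomp⟩
    constructor
    · intro e he hder
      have hatt : ABAF.AAtt F D E := ⟨e, he, hder⟩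
      obtain ⟨d, hdD, hEd⟩ := hdef D hDsub hatt
      exact hdD.2 hEd
    · intro a ha haE
      by_contra hnd
      have : ({a} : Set L) ⊆ E := by
        apply hcomp {a} (by simpa using ha)
        intro C hC ⟨b, hb, hCb⟩
        rcases hb with rfl
        have : ¬ C ⊆ D := fun hsub => hnd (ABAF.fwd_mono F hsub hCb)
        obtain ⟨c, hcC, hcD⟩ := Set.not_subset.mp this
        have hcE : ABAF.Fwd F E (F.contrary c) := by
          by_contra h
          exact hcD ⟨hC hcC, h⟩
        exact ⟨c, hcC, hcE⟩
      exact haE (this rfl)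
  · rintro ⟨h1, h2⟩
    have hdef : ABAF.ADef F E E := by
      intro C hC ⟨e, he, hCe⟩
      have : ¬ C ⊆ D := fun hsub => h1 e he (ABAF.fwd_mono F hsub hCe)
      obtain ⟨c, hcC, hcD⟩ := Set.not_subset.mp this
      have hcE : ABAF.Fwd F E (F.contrary c) := by
        by_contra h
        exact hcD ⟨hC hcC, h⟩
      exact ⟨c, hcC, hcE⟩
    refine ⟨⟨hE, hcf, hdef⟩, ?_⟩
    intro B hB hdefB b hb
    by_contra hbE
    have hattD : ABAF.AAtt F D B := ⟨b, hb, h2 b (hB hb) hbE⟩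
    obtain ⟨d, hdD, hEd⟩ := hdefB D hDsub hattD
    exact hdD.2 hEd
end
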